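/- Fix a = 1/40 and b > 0. Let μ be a finite Borel measure and Q a square such that Q is not (a,b)-balanced with respect to μ (i.e., there do not exist two subsquares Q₁, Q₂ ⊂ Q with dist(Q₁,Q₂) ≥ a·ℓ(Q), ℓ(Qᵢ) ≤ (a/10)ℓ(Q), and μ(Qᵢ) ≥ b·μ(Q) for i = 1,2). Then there exists a square P ⊂ Q with ℓ(P) ≤ ℓ(Q)/10 such that μ(P) ≥ (1 − 2·10⁵·b)·μ(Q). -/

import Mathlib

open MeasureTheory

/-- The closed axis-parallel square with center `c` and side length `l`. -/
def square (c : ℂ) (l : ℝ) : Set ℂ := {z | |z.re - c.re| ≤ l / 2 ∧ |z.im - c.im| ≤ l / 2}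

/-- The square with center `c` and side `l` is `(a,b)`-balanced with respect to `μ`:
there are two squares `Q₁, Q₂ ⊆ Q` with `dist(Q₁,Q₂) ≥ a·ℓ(Q)`, `ℓ(Qᵢ) ≤ (a/10)·ℓ(Q)`
and `μ(Qᵢ) ≥ b·μ(Q)` for `i = 1, 2`. -/
def IsBalanced (μ : Measure ℂ) (a b : ℝ) (c : ℂ) (l : ℝ) : Prop :=
  ∃ (c₁ : ℂ) (l₁ : ℝ) (c₂ : ℂ) (l₂ : ℝ),
    square c₁ l₁ ⊆ square c l ∧ square c₂ l₂ ⊆ square c l ∧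
    (∀ p ∈ square c₁ l₁, ∀ q ∈ square c₂ l₂, a * l ≤ dist p q) ∧
    l₁ ≤ a / 10 * l ∧ l₂ ≤ a / 10 * l ∧
    ENNReal.ofReal b * μ (square c l) ≤ μ (square c₁ l₁) ∧
    ENNReal.ofReal b * μ (square c l) ≤ μ (square c₂ l₂)

/-! Cut `Q` into a `400 × 400` grid of cells of side `ℓ(Q)/400 = (a/10)·ℓ(Q)`. Since `Q` is not
balanced, any two cells of mass at least `b·μ(Q)` are closer than `a·ℓ(Q)`, so all such heavy
cells fit in one square of side `ℓ(Q)/10`, which can be moved inside `Q`. The remaining light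
cells carry at most `400² · b·μ(Q)` in total. -/

open scoped ENNReal

lemma square_subset_square {c c' : ℂ} {l l' : ℝ} (hre : |c'.re - c.re| + l' / 2 ≤ l / 2)
    (him : |c'.im - c.im| + l' / 2 ≤ l / 2) : square c' l' ⊆ square c l := fun z hz =>
  ⟨(abs_sub_le _ c'.re _).trans (by linarith [hz.1]),
    (abs_sub_le _ c'.im _).trans (by linarith [hz.2])⟩

lemma square_mono {c : ℂ} {l l' : ℝ} (h : l' ≤ l) : square c l' ⊆ square c l :=
  square_subset_square (by simp; linarith) (by simp; linarith)

lemma square_subset_square_of_mem {c₁ c₂ p q : ℂ} {l₁ l₂ : ℝ} (hp : p ∈ square c₁ l₁)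
    (hq : q ∈ square c₂ l₂) : square c₁ l₁ ⊆ square c₂ (2 * l₁ + l₂ + 2 * dist p q) := by
  have hre : |p.re - q.re| ≤ dist p q := by
    simpa [Complex.dist_eq] using Complex.abs_re_le_norm (p - q)
  have him : |p.im - q.im| ≤ dist p q := by
    simpa [Complex.dist_eq] using Complex.abs_im_le_norm (p - q)
  refine square_subset_square ?_ ?_
  · linarith [abs_sub_le c₁.re p.re q.re, abs_sub_le c₁.re q.re c₂.re, abs_sub_comm c₁.re p.re,
      hp.1, hq.1]
  · linarith [abs_sub_le c₁.im p.im q.im, abs_sub_le c₁.im q.im c₂.im, abs_sub_comm c₁.im p.im,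
      hp.2, hq.2]

lemma exists_fin_abs_sub_add_half_le {N : ℕ} [NeZero N] {t : ℝ} (h0 : 0 ≤ t) (hN : t ≤ N) :
    ∃ k : Fin N, |t - (k + 1 / 2)| ≤ 1 / 2 := by
  have hN0 : 0 < N := Nat.pos_of_ne_zero (NeZero.ne N)
  refine ⟨⟨min ⌊t⌋₊ (N - 1), by omega⟩, abs_le.2 ?_⟩
  have hfloor := Nat.floor_le h0
  rcases le_total ⌊t⌋₊ (N - 1) with h | h
  · have := Nat.lt_floor_add_one t
    simp only [min_eq_left h]
    constructor <;> linarith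
  · have hcast : ((N - 1 : ℕ) : ℝ) = N - 1 := by rw [Nat.cast_sub hN0, Nat.cast_one]
    have : ((N - 1 : ℕ) : ℝ) ≤ ⌊t⌋₊ := by exact_mod_cast h
    simp only [min_eq_right h, hcast] at this ⊢
    constructor <;> linarith

noncomputable def gridPoint (c l : ℝ) (N k : ℕ) : ℝ := c - l / 2 + (k + 1 / 2) * (l / N)

lemma abs_gridPoint_sub_add_le {c l : ℝ} {N k : ℕ} (hl : 0 ≤ l) (hk : k < N) :
    |gridPoint c l N k - c| + l / N / 2 ≤ l / 2 := by
  have hN : (0 : ℝ) < N := by exact_mod_cast (Nat.zero_le k).trans_lt hk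
  have hkN : (k : ℝ) + 1 ≤ N := by exact_mod_cast hk
  have hs : 0 ≤ l / N := by positivity
  have hk0 : (0 : ℝ) ≤ k := k.cast_nonneg
  have hcenter : gridPoint c l N k - c = (k + 1 / 2 - N / 2) * (l / N) := by
    rw [gridPoint]; field_simp; ring
  have habs : |(k : ℝ) + 1 / 2 - N / 2| ≤ N / 2 - 1 / 2 := abs_le.2 ⟨by linarith, by linarith⟩
  calc |gridPoint c l N k - c| + l / N / 2
      = |(k : ℝ) + 1 / 2 - N / 2| * (l / N) + l / N / 2 := by
        rw [hcenter, abs_mul, abs_of_nonneg hs]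
    _ ≤ (N / 2 - 1 / 2) * (l / N) + l / N / 2 := by gcongr
    _ = l / 2 := by field_simp; ring

lemma exists_abs_sub_gridPoint_le {N : ℕ} [NeZero N] {x c l : ℝ} (hl : 0 < l)
    (hx : |x - c| ≤ l / 2) : ∃ k : Fin N, |x - gridPoint c l N k| ≤ l / N / 2 := by
  have hN : (0 : ℝ) < N := by exact_mod_cast Nat.pos_of_ne_zero (NeZero.ne N)
  have hs : 0 < l / N := by positivity
  rw [abs_le] at hx
  obtain ⟨k, hk⟩ := exists_fin_abs_sub_add_half_le (N := N)
    (t := (x - c + l / 2) / (l / N)) (by apply div_nonneg <;> linarith)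
    (by rw [div_le_iff₀ hs]; field_simp; linarith)
  refine ⟨k, ?_⟩
  have hscale : x - gridPoint c l N k = ((x - c + l / 2) / (l / N) - (k + 1 / 2)) * (l / N) := by
    rw [gridPoint]; field_simp; ring
  rw [hscale, abs_mul, abs_of_pos hs]
  nlinarith

noncomputable def gridCell (c : ℂ) (l : ℝ) (N : ℕ) (ij : Fin N × Fin N) : Set ℂ :=
  square ⟨gridPoint c.re l N ij.1, gridPoint c.im l N ij.2⟩ (l / N)

lemma gridCell_subset {c : ℂ} {l : ℝ} {N : ℕ} (hl : 0 ≤ l) (ij : Fin N × Fin N) :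
    gridCell c l N ij ⊆ square c l :=
  square_subset_square (abs_gridPoint_sub_add_le hl ij.1.isLt)
    (abs_gridPoint_sub_add_le hl ij.2.isLt)

lemma exists_mem_gridCell {N : ℕ} [NeZero N] {c z : ℂ} {l : ℝ} (hl : 0 < l)
    (hz : z ∈ square c l) : ∃ ij, z ∈ gridCell c l N ij := by
  obtain ⟨i, hi⟩ := exists_abs_sub_gridPoint_le (N := N) hl hz.1
  obtain ⟨j, hj⟩ := exists_abs_sub_gridPoint_le (N := N) hl hz.2
  exact ⟨(i, j), hi, hj⟩

lemma abs_sub_clamp_le {x c₀ c r L : ℝ} (hx₀ : |x - c₀| ≤ r) (hx : |x - c| ≤ L) :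
    |x - max (c - L + r) (min c₀ (c + L - r))| ≤ r := by
  rw [abs_le] at *
  have hupper : max (c - L + r) (min c₀ (c + L - r)) ≤ x + r :=
    max_le (by linarith) ((min_le_left _ _).trans (by linarith))
  have hlower : x - r ≤ max (c - L + r) (min c₀ (c + L - r)) :=
    le_max_of_le_right (le_min (by linarith) (by linarith))
  constructor <;> linarith

lemma abs_clamp_sub_add_le {c₀ c r L : ℝ} (hr : r ≤ L) :
    |max (c - L + r) (min c₀ (c + L - r)) - c| + r ≤ L := by
  have := le_max_left (c - L + r) (min c₀ (c + L - r))
  have := max_le (by linarith : c - L + r ≤ c + L - r) (min_le_right c₀ (c + L - r))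
  rw [← le_sub_iff_add_le, abs_le]
  constructor <;> linarith

lemma exists_square_subset_inter_subset (c₀ c : ℂ) {s l : ℝ} (hsl : s ≤ l) :
    ∃ p, square p s ⊆ square c l ∧ square c₀ s ∩ square c l ⊆ square p s := by
  have hr : s / 2 ≤ l / 2 := by linarith
  exact ⟨⟨max (c.re - l / 2 + s / 2) (min c₀.re (c.re + l / 2 - s / 2)),
      max (c.im - l / 2 + s / 2) (min c₀.im (c.im + l / 2 - s / 2))⟩,
    square_subset_square (abs_clamp_sub_add_le hr) (abs_clamp_sub_add_le hr),
    fun _ hz => ⟨abs_sub_clamp_le hz.1.1 hz.2.1, abs_sub_clamp_le hz.1.2 hz.2.2⟩⟩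

lemma exists_dist_lt_of_not_isBalanced {μ : Measure ℂ} {a b l l₁ l₂ : ℝ} {c c₁ c₂ : ℂ}
    (h : ¬ IsBalanced μ a b c l) (h₁ : square c₁ l₁ ⊆ square c l)
    (h₂ : square c₂ l₂ ⊆ square c l) (hl₁ : l₁ ≤ a / 10 * l) (hl₂ : l₂ ≤ a / 10 * l)
    (hμ₁ : ENNReal.ofReal b * μ (square c l) ≤ μ (square c₁ l₁))
    (hμ₂ : ENNReal.ofReal b * μ (square c l) ≤ μ (square c₂ l₂)) :
    ∃ p ∈ square c₁ l₁, ∃ q ∈ square c₂ l₂, dist p q < a * l := by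
  by_contra! hfar
  exact h ⟨c₁, l₁, c₂, l₂, h₁, h₂, hfar, hl₁, hl₂, hμ₁, hμ₂⟩

lemma exists_square_superset_heavy_gridCells {μ : Measure ℂ} {b l : ℝ} {c : ℂ} (hl : 0 < l)
    (h : ¬ IsBalanced μ (1 / 40) b c l) :
    ∃ p, square p (l / 10) ⊆ square c l ∧ ∀ ij,
      ENNReal.ofReal b * μ (square c l) ≤ μ (gridCell c l 400 ij) →
        gridCell c l 400 ij ⊆ square p (l / 10) := by
  by_cases hheavy : ∃ ij₀, ENNReal.ofReal b * μ (square c l) ≤ μ (gridCell c l 400 ij₀)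
  · obtain ⟨ij₀, hij₀⟩ := hheavy
    obtain ⟨p, hpQ, hp⟩ := exists_square_subset_inter_subset
      ⟨gridPoint c.re l 400 ij₀.1, gridPoint c.im l 400 ij₀.2⟩ c (by linarith : l / 10 ≤ l)
    refine ⟨p, hpQ, fun ij hij z hz => hp ⟨?_, gridCell_subset hl.le ij hz⟩⟩
    obtain ⟨x, hx, y, hy, hxy⟩ := exists_dist_lt_of_not_isBalanced h (gridCell_subset hl.le ij)
      (gridCell_subset hl.le ij₀) (by norm_num; linarith) (by norm_num; linarith) hij hij₀
    -- the enlarged square has side `3ℓ/400 + 2·dist x y < 23ℓ/400 < ℓ/10`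
    exact square_mono (by norm_num at hxy ⊢; linarith) (square_subset_square_of_mem hx hy hz)
  · simp only [not_exists, not_le] at hheavy
    exact ⟨c, square_mono (by linarith), fun ij hij => absurd hij (not_le.2 (hheavy ij))⟩

lemma measure_le_add_card_mul_of_subset_iUnion {α ι : Type*} [MeasurableSpace α] [Fintype ι]
    (μ : Measure α) {Q P : Set α} {S : ι → Set α} {ε : ℝ≥0∞} (hQ : Q ⊆ ⋃ i, S i)
    (hS : ∀ i, S i ⊆ P ∨ μ (S i) ≤ ε) : μ Q ≤ μ P + Fintype.card ι * ε := by
  have hdiff : ∀ i, μ (S i \ P) ≤ ε := fun i => (hS i).elim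
    (fun h => by simp [Set.sdiff_eq_empty.2 h]) (fun h => (measure_mono Set.sdiff_subset).trans h)
  calc μ Q ≤ μ (Q ∩ P) + μ (Q \ P) := measure_le_inter_add_sdiff μ Q P
    _ ≤ μ P + μ (⋃ i, S i \ P) := by
      gcongr
      · exact Set.inter_subset_right
      · rw [← Set.iUnion_sdiff]; exact Set.sdiff_subset_sdiff_left hQ
    _ ≤ μ P + ∑ i, μ (S i \ P) := by gcongr; exact measure_iUnion_fintype_le μ _
    _ ≤ μ P + ∑ _ : ι, ε := by gcongr with i; exact hdiff i
    _ = μ P + Fintype.card ι * ε := by simp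

lemma ofReal_one_sub_mul_le_of_le_add {x y : ℝ≥0∞} {δ : ℝ} (hδ : 0 ≤ δ) (hx : x ≠ ⊤)
    (h : x ≤ y + ENNReal.ofReal δ * x) : ENNReal.ofReal (1 - δ) * x ≤ y := by
  rw [ENNReal.ofReal_sub _ hδ, ENNReal.ofReal_one, ENNReal.sub_mul (fun _ _ => hx), one_mul]
  exact tsub_le_iff_right.2 h

theorem stmt6 (μ : Measure ℂ) [IsFiniteMeasure μ] (b : ℝ) (hb : 0 < b)
    (c : ℂ) (l : ℝ) (hl : 0 < l)
    (h : ¬ IsBalanced μ (1 / 40) b c l) :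
    ∃ (p : ℂ) (lp : ℝ), square p lp ⊆ square c l ∧ lp ≤ l / 10 ∧
      ENNReal.ofReal (1 - 2 * 10 ^ 5 * b) * μ (square c l) ≤ μ (square p lp) := by
  obtain ⟨p, hpQ, hheavy⟩ := exists_square_superset_heavy_gridCells hl h
  refine ⟨p, l / 10, hpQ, le_rfl, ?_⟩
  have hlight : μ (square c l) ≤
      μ (square p (l / 10)) + ENNReal.ofReal (160000 * b) * μ (square c l) := by
    have := measure_le_add_card_mul_of_subset_iUnion μ
      (fun z hz => Set.mem_iUnion.2 (exists_mem_gridCell (N := 400) hl hz))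
      (fun ij => (le_or_gt _ _).imp (hheavy ij) le_of_lt)
    rw [ENNReal.ofReal_mul (by norm_num), mul_assoc]
    convert this using 3
    simp
  calc ENNReal.ofReal (1 - 2 * 10 ^ 5 * b) * μ (square c l)
      ≤ ENNReal.ofReal (1 - 160000 * b) * μ (square c l) := by gcongr; linarith
    _ ≤ μ (square p (l / 10)) :=
      ofReal_one_sub_mul_le_of_le_add (by positivity) (measure_ne_top μ _) hlight
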